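/- Let E be a real Banach space and let U, V, W be invertible linear isometries of E satisfying the Heisenberg relations. Let d ∈ ℕ and let A, B ⊆ {0, …, d−1} be nonempty finite sets with (max A)·(max B) ≤ d − 2. Then the bounded operators satisfy ‖ ( (∏_{a ∈ A} X_a)(∏_{b ∈ B} Y_b) − (∏_{b ∈ B} Y_b)(∏_{a ∈ A} X_a) ) ∘ Z^d ‖ ≤ 8·(1/2)^{d − max A − max B} (the X_a commute with one another and the Y_b commute with one another, so the products are well-defined). In particular, for d₁, d₂, d₃ ∈ ℕ with d₁ + d₂ ≤ d₃ − 2 one has ‖ (X^{d₁} Y^{d₂} − Y^{d₂} X^{d₁}) ∘ Z^{d₃} ‖ ≤ 8·(1/2)^{d₃ − (d₁ + d₂)}. -/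

import Mathlib

/-- `U, V, W` satisfy the Heisenberg relations `W = U⁻¹V⁻¹UV`, `UW = WU`, `VW = WV`
(the multiplication on `E ≃ₗᵢ[ℝ] E` is composition, `(e₁ * e₂) x = e₁ (e₂ x)`). -/
def HeisenbergRel {E : Type*} [NormedAddCommGroup E] [NormedSpace ℝ E]
    (U V W : E ≃ₗᵢ[ℝ] E) : Prop :=
  W = U⁻¹ * V⁻¹ * U * V ∧ U * W = W * U ∧ V * W = W * V

/-- The bounded operator on `E` underlying an invertible linear isometry. -/
noncomputable def isomCLM {E : Type*} [NormedAddCommGroup E] [NormedSpace ℝ E]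
    (U : E ≃ₗᵢ[ℝ] E) : E →L[ℝ] E :=
  U.toLinearIsometry.toContinuousLinearMap

/-- The averaging operator `2^{-d} ∑_{a=0}^{2^d - 1} U^a`. -/
noncomputable def avgOp {E : Type*} [NormedAddCommGroup E] [NormedSpace ℝ E]
    (U : E ≃ₗᵢ[ℝ] E) (d : ℕ) : E →L[ℝ] E :=
  ((2 : ℝ) ^ d)⁻¹ • ∑ a ∈ Finset.range (2 ^ d), isomCLM (U ^ a)

/-- The operator `(I + U^{2^k})/2`. -/
noncomputable def halfOp {E : Type*} [NormedAddCommGroup E] [NormedSpace ℝ E]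
    (U : E ≃ₗᵢ[ℝ] E) (k : ℕ) : E →L[ℝ] E :=
  (2⁻¹ : ℝ) • (1 + isomCLM (U ^ 2 ^ k))

/-- The product `∏_{a ∈ A} f a` of pairwise commuting operators, taken in increasing order
of the indices. -/
noncomputable def finsetProdOp {E : Type*} [NormedAddCommGroup E] [NormedSpace ℝ E]
    (f : ℕ → E →L[ℝ] E) (A : Finset ℕ) : E →L[ℝ] E :=
  ((A.sort (· ≤ ·)).map f).prod


/-! Put `J = U^{2^a}`, `K = V^{2^b}`. The Heisenberg relations give `JK = KJ W^{2^{a+b}}`,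
hence `X_a Y_b - Y_b X_a = ¼ KJ (W^{2^{a+b}} - I)`. Since `(W - I) Z^d = 2^{-d} (W^{2^d} - I)`
telescopes, `‖(W^m - I) Z^d‖ ≤ 2m / 2^d`, so `‖[X_a, Y_b] Z^d‖ ≤ 2^{a+b-d-1}`. All factors are
contractions commuting with `Z^d`, so the commutator of the two products is bounded by the sum of
the pairwise bounds, which is less than `2^{max A + max B + 1 - d}`. The second claim is the
special case `A = {0, …, d₁-1}`, `B = {0, …, d₂-1}`, because `X^d = X_0 X_1 ⋯ X_{d-1}`. -/

section NormedRing

variable {R : Type*} [SeminormedRing R]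

-- `‖1‖ ≤ 1` rather than `[NormOneClass R]`, which fails for operators on the zero space.

lemma norm_list_prod_le_one (h1 : ‖(1 : R)‖ ≤ 1) {l : List R}
    (hl : ∀ x ∈ l, ‖x‖ ≤ 1) : ‖l.prod‖ ≤ 1 := by
  induction l with
  | nil => simpa using h1
  | cons x l ih =>
    rw [List.prod_cons]
    simp only [List.mem_cons, forall_eq_or_imp] at hl
    exact (norm_mul_le_of_le hl.1 (ih hl.2)).trans_eq (one_mul 1)

lemma norm_commutator_mul_mul_le {x P Q Z : R} (hx : ‖x‖ ≤ 1) (hP : ‖P‖ ≤ 1)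
    (hPZ : Commute P Z) :
    ‖(x * P * Q - Q * (x * P)) * Z‖ ≤ ‖(P * Q - Q * P) * Z‖ + ‖(x * Q - Q * x) * Z‖ := by
  have split : (x * P * Q - Q * (x * P)) * Z
      = x * ((P * Q - Q * P) * Z) + (x * Q - Q * x) * Z * P := by
    rw [mul_assoc _ Z, ← hPZ.eq]
    noncomm_ring
  rw [split]
  refine (norm_add_le _ _).trans (add_le_add ?_ ?_)
  · exact (norm_mul_le _ _).trans (mul_le_of_le_one_left (norm_nonneg _) hx)
  · exact (norm_mul_le _ _).trans (mul_le_of_le_one_right (norm_nonneg _) hP)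

lemma norm_commutator_list_prod_mul_le (h1 : ‖(1 : R)‖ ≤ 1) {l : List R} {Q Z : R}
    (hl : ∀ x ∈ l, ‖x‖ ≤ 1 ∧ Commute x Z) :
    ‖(l.prod * Q - Q * l.prod) * Z‖ ≤ (l.map fun x => ‖(x * Q - Q * x) * Z‖).sum := by
  induction l with
  | nil => simp
  | cons x l ih =>
    simp only [List.mem_cons, forall_eq_or_imp] at hl
    rw [List.prod_cons, List.map_cons, List.sum_cons, add_comm]
    refine (norm_commutator_mul_mul_le hl.1.1 ?_ ?_).trans (add_le_add_left (ih hl.2) _)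
    · exact norm_list_prod_le_one h1 fun y hy => (hl.2 y hy).1
    · exact Commute.list_prod_left _ _ fun y hy => (hl.2 y hy).2

lemma norm_commutator_list_prod_list_prod_mul_le (h1 : ‖(1 : R)‖ ≤ 1) {l₁ l₂ : List R}
    {Z : R} (hl₁ : ∀ x ∈ l₁, ‖x‖ ≤ 1 ∧ Commute x Z) (hl₂ : ∀ y ∈ l₂, ‖y‖ ≤ 1 ∧ Commute y Z) :
    ‖(l₁.prod * l₂.prod - l₂.prod * l₁.prod) * Z‖ ≤
      (l₁.map fun x => (l₂.map fun y => ‖(x * y - y * x) * Z‖).sum).sum := by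
  refine (norm_commutator_list_prod_mul_le h1 hl₁).trans (List.sum_le_sum fun x _ => ?_)
  calc ‖(x * l₂.prod - l₂.prod * x) * Z‖ = ‖(l₂.prod * x - x * l₂.prod) * Z‖ := by
        rw [← norm_neg, ← neg_mul, neg_sub]
    _ ≤ (l₂.map fun y => ‖(y * x - x * y) * Z‖).sum :=
        norm_commutator_list_prod_mul_le h1 hl₂
    _ = (l₂.map fun y => ‖(x * y - y * x) * Z‖).sum := by
      simp only [← neg_sub (x * _), neg_mul, norm_neg]

end NormedRing

lemma pow_mul_pow_eq_of_heisenberg {G : Type*} [Group G] {U V W : G} (h : U * V = V * U * W)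
    (hUW : Commute U W) (hVW : Commute V W) (m n : ℕ) :
    U ^ m * V ^ n = V ^ n * U ^ m * W ^ (m * n) := by
  have hV : SemiconjBy U (V ^ n) (V ^ n * W ^ n) := by
    rw [← hVW.mul_pow]
    refine SemiconjBy.pow_right ?_ n
    rw [SemiconjBy, h, mul_assoc, hUW.eq, ← mul_assoc]
  have hU : SemiconjBy (V ^ n) (U * W ^ n) U := by
    rw [SemiconjBy, ← mul_assoc, hV.eq, mul_assoc, ((hUW.pow_right n).eq), ← mul_assoc]
  have := hU.pow_right m
  rw [(hUW.pow_right n).mul_pow, ← pow_mul, mul_comm n] at this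
  rw [← this.eq, mul_assoc]

lemma Finset.sum_map_sort {α M : Type*} [AddCommMonoid M] (s : Finset α) (r : α → α → Prop)
    [DecidableRel r] [IsTrans α r] [Std.Antisymm r] [Std.Total r] (f : α → M) :
    ((s.sort r).map f).sum = ∑ x ∈ s, f x := by
  rw [Finset.sum_eq_multiset_sum, ← Finset.sort_eq s r, Multiset.map_coe, Multiset.sum_coe]

section Operators

variable {E : Type*} [NormedAddCommGroup E] [NormedSpace ℝ E]

@[simp] lemma isomCLM_mul (U V : E ≃ₗᵢ[ℝ] E) : isomCLM (U * V) = isomCLM U * isomCLM V :=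
  rfl

@[simp] lemma isomCLM_pow (U : E ≃ₗᵢ[ℝ] E) (n : ℕ) : isomCLM (U ^ n) = isomCLM U ^ n := by
  induction n with
  | zero => rfl
  | succ n ih => rw [pow_succ, pow_succ, isomCLM_mul, ih]

lemma norm_isomCLM_le (U : E ≃ₗᵢ[ℝ] E) : ‖isomCLM U‖ ≤ 1 :=
  U.toLinearIsometry.norm_toContinuousLinearMap_le

lemma norm_isomCLM_pow_le (U : E ≃ₗᵢ[ℝ] E) (n : ℕ) : ‖isomCLM U ^ n‖ ≤ 1 :=
  isomCLM_pow U n ▸ norm_isomCLM_le (U ^ n)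

lemma commute_isomCLM {U W : E ≃ₗᵢ[ℝ] E} (h : Commute U W) :
    Commute (isomCLM U) (isomCLM W) := by
  rw [Commute, SemiconjBy, ← isomCLM_mul, ← isomCLM_mul, h.eq]

lemma commute_isomCLM_pow_avgOp {U W : E ≃ₗᵢ[ℝ] E} (h : Commute U W) (m d : ℕ) :
    Commute (isomCLM U ^ m) (avgOp W d) :=
  (Commute.sum_right _ _ _ fun c _ => by
    simpa only [isomCLM_pow] using commute_isomCLM (h.pow_pow m c)).smul_right _

lemma commute_halfOp_avgOp {U W : E ≃ₗᵢ[ℝ] E} (h : Commute U W) (k d : ℕ) :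
    Commute (halfOp U k) (avgOp W d) := by
  rw [halfOp, isomCLM_pow]
  exact ((Commute.one_left _).add_left (commute_isomCLM_pow_avgOp h _ d)).smul_left _

lemma norm_halfOp_le (U : E ≃ₗᵢ[ℝ] E) (k : ℕ) : ‖halfOp U k‖ ≤ 1 := by
  rw [halfOp, norm_smul, Real.norm_of_nonneg (by norm_num)]
  have : ‖(1 : E →L[ℝ] E) + isomCLM (U ^ 2 ^ k)‖ ≤ 1 + 1 :=
    norm_add_le_of_le ContinuousLinearMap.norm_id_le (norm_isomCLM_le _)
  linarith

lemma sub_one_mul_avgOp (W : E ≃ₗᵢ[ℝ] E) (d : ℕ) :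
    (isomCLM W - 1) * avgOp W d = ((2 : ℝ) ^ d)⁻¹ • (isomCLM W ^ 2 ^ d - 1) := by
  simp only [avgOp, mul_smul_comm, isomCLM_pow, mul_geom_sum]

lemma norm_sub_one_mul_avgOp_le (W : E ≃ₗᵢ[ℝ] E) (d : ℕ) :
    ‖(isomCLM W - 1) * avgOp W d‖ ≤ 2 / 2 ^ d := by
  rw [sub_one_mul_avgOp, norm_smul, Real.norm_of_nonneg (by positivity), inv_mul_eq_div]
  gcongr
  exact (norm_sub_le_of_le (norm_isomCLM_pow_le W _) ContinuousLinearMap.norm_id_le).trans_eq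
    one_add_one_eq_two

lemma norm_pow_sub_one_mul_avgOp_le (W : E ≃ₗᵢ[ℝ] E) (m d : ℕ) :
    ‖(isomCLM W ^ m - 1) * avgOp W d‖ ≤ 2 * m / 2 ^ d := by
  have hsum : ‖∑ i ∈ Finset.range m, isomCLM W ^ i‖ ≤ m :=
    (norm_sum_le _ _).trans <| by
      simpa using Finset.sum_le_sum (s := Finset.range m) fun i _ => norm_isomCLM_pow_le W i
  calc _ = ‖(∑ i ∈ Finset.range m, isomCLM W ^ i) * ((isomCLM W - 1) * avgOp W d)‖ := by
        rw [← mul_assoc, geom_sum_mul]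
    _ ≤ m * (2 / 2 ^ d) := norm_mul_le_of_le hsum (norm_sub_one_mul_avgOp_le W d)
    _ = 2 * m / 2 ^ d := by ring

lemma avgOp_succ (U : E ≃ₗᵢ[ℝ] E) (n : ℕ) : avgOp U (n + 1) = avgOp U n * halfOp U n := by
  set T := isomCLM U
  have hsplit : ∑ a ∈ Finset.range (2 ^ (n + 1)), T ^ a
      = (∑ a ∈ Finset.range (2 ^ n), T ^ a) * (1 + T ^ 2 ^ n) := by
    rw [pow_succ, mul_two, Finset.sum_range_add, mul_add, mul_one, Finset.sum_mul]
    simp only [← pow_add, add_comm]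
  simp only [avgOp, halfOp, isomCLM_pow, smul_mul_smul_comm]
  rw [hsplit, pow_succ, mul_inv]

lemma HeisenbergRel.isomCLM_pow_mul_pow {U V W : E ≃ₗᵢ[ℝ] E} (hrel : HeisenbergRel U V W)
    (m n : ℕ) : isomCLM U ^ m * isomCLM V ^ n
      = isomCLM V ^ n * isomCLM U ^ m * isomCLM W ^ (m * n) := by
  obtain ⟨hW, hUW, hVW⟩ := hrel
  have hUV : U * V = V * U * W := by rw [hW]; group
  simpa only [isomCLM_mul, isomCLM_pow] using
    congrArg isomCLM (pow_mul_pow_eq_of_heisenberg hUV hUW hVW m n)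

lemma norm_commutator_halfOp_mul_avgOp_le {U V W : E ≃ₗᵢ[ℝ] E} (hrel : HeisenbergRel U V W)
    (a b d : ℕ) :
    ‖(halfOp U a * halfOp V b - halfOp V b * halfOp U a) * avgOp W d‖ ≤
      2 ^ (a + b) / 2 ^ (d + 1) := by
  set J := isomCLM U ^ 2 ^ a
  set K := isomCLM V ^ 2 ^ b
  set P := isomCLM W ^ (2 ^ a * 2 ^ b)
  have hJK : J * K = K * J * P := hrel.isomCLM_pow_mul_pow _ _
  have hcomm : halfOp U a * halfOp V b - halfOp V b * halfOp U a =
      (4⁻¹ : ℝ) • (K * J * (P - 1)) := by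
    simp only [halfOp, isomCLM_pow, smul_mul_smul_comm, ← smul_sub]
    rw [show (2⁻¹ : ℝ) * 2⁻¹ = 4⁻¹ by norm_num]
    congr 1
    rw [mul_sub, mul_one, ← hJK]
    noncomm_ring
  calc ‖(halfOp U a * halfOp V b - halfOp V b * halfOp U a) * avgOp W d‖
      = 4⁻¹ * ‖K * J * ((P - 1) * avgOp W d)‖ := by
        rw [hcomm, smul_mul_assoc, norm_smul, Real.norm_of_nonneg (by norm_num), mul_assoc]
    _ ≤ 4⁻¹ * (1 * 1 * (2 * ((2 ^ a * 2 ^ b : ℕ) : ℝ) / 2 ^ d)) := by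
        gcongr
        exact norm_mul_le_of_le (norm_mul_le_of_le (norm_isomCLM_pow_le V _)
          (norm_isomCLM_pow_le U _)) (norm_pow_sub_one_mul_avgOp_le W _ d)
    _ = 2 ^ (a + b) / 2 ^ (d + 1) := by push_cast; ring

lemma avgOp_eq_finsetProdOp (U : E ≃ₗᵢ[ℝ] E) (n : ℕ) :
    avgOp U n = finsetProdOp (halfOp U) (Finset.range n) := by
  rw [finsetProdOp, Finset.sort_range]
  induction n with
  | zero => simp [avgOp]
  | succ n ih => rw [avgOp_succ, ih, List.range_succ, List.map_append, List.prod_append]; simp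

lemma norm_commutator_finsetProdOp_mul_avgOp_le {U V W : E ≃ₗᵢ[ℝ] E}
    (hrel : HeisenbergRel U V W) (A B : Finset ℕ) (d : ℕ) :
    ‖(finsetProdOp (halfOp U) A * finsetProdOp (halfOp V) B -
        finsetProdOp (halfOp V) B * finsetProdOp (halfOp U) A) * avgOp W d‖ ≤
      (∑ a ∈ A, (2 : ℝ) ^ a) * (∑ b ∈ B, (2 : ℝ) ^ b) / 2 ^ (d + 1) := by
  have hX : ∀ x ∈ A.sort.map (halfOp U), ‖x‖ ≤ 1 ∧ Commute x (avgOp W d) := by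
    simp only [List.forall_mem_map]
    exact fun a _ => ⟨norm_halfOp_le U a, commute_halfOp_avgOp hrel.2.1 a d⟩
  have hY : ∀ y ∈ B.sort.map (halfOp V), ‖y‖ ≤ 1 ∧ Commute y (avgOp W d) := by
    simp only [List.forall_mem_map]
    exact fun b _ => ⟨norm_halfOp_le V b, commute_halfOp_avgOp hrel.2.2 b d⟩
  calc _ ≤ ∑ a ∈ A, ∑ b ∈ B,
        ‖(halfOp U a * halfOp V b - halfOp V b * halfOp U a) * avgOp W d‖ := by
        simpa only [finsetProdOp, List.map_map, Function.comp_def, Finset.sum_map_sort] using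
          norm_commutator_list_prod_list_prod_mul_le ContinuousLinearMap.norm_id_le hX hY
    _ ≤ ∑ a ∈ A, ∑ b ∈ B, (2 : ℝ) ^ (a + b) / 2 ^ (d + 1) := by
        gcongr with a _ b _
        exact norm_commutator_halfOp_mul_avgOp_le hrel a b d
    _ = _ := by simp only [pow_add, Finset.sum_mul_sum, Finset.sum_div]

lemma norm_commutator_finsetProdOp_mul_avgOp_le_zpow {U V W : E ≃ₗᵢ[ℝ] E}
    (hrel : HeisenbergRel U V W) {A B : Finset ℕ} {s t : ℕ} (hA : ∀ a ∈ A, a < s)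
    (hB : ∀ b ∈ B, b < t) (d : ℕ) :
    ‖(finsetProdOp (halfOp U) A * finsetProdOp (halfOp V) B -
        finsetProdOp (halfOp V) B * finsetProdOp (halfOp U) A) * avgOp W d‖ ≤
      (2 : ℝ) ^ ((s : ℤ) + t - d - 1) := by
  have hsumA : ∑ a ∈ A, (2 : ℝ) ^ a ≤ 2 ^ s := mod_cast (Nat.geomSum_lt le_rfl hA).le
  have hsumB : ∑ b ∈ B, (2 : ℝ) ^ b ≤ 2 ^ t := mod_cast (Nat.geomSum_lt le_rfl hB).le
  calc _ ≤ (∑ a ∈ A, (2 : ℝ) ^ a) * (∑ b ∈ B, (2 : ℝ) ^ b) / 2 ^ (d + 1) :=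
        norm_commutator_finsetProdOp_mul_avgOp_le hrel A B d
    _ ≤ 2 ^ s * 2 ^ t / 2 ^ (d + 1) := by gcongr
    _ = (2 : ℝ) ^ ((s : ℤ) + t - d - 1) := by
        rw [zpow_sub₀ two_ne_zero, zpow_sub₀ two_ne_zero, zpow_add₀ two_ne_zero]
        simp only [zpow_natCast, zpow_one, pow_succ, div_div]

end Operators

lemma two_zpow_le_eight_mul_inv_two_zpow {n e : ℤ} (h : n + e ≤ 3) :
    (2 : ℝ) ^ n ≤ 8 * 2⁻¹ ^ e := by
  rw [inv_zpow', show (8 : ℝ) = 2 ^ (3 : ℤ) by norm_num, ← zpow_add₀ two_ne_zero]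
  exact zpow_le_zpow_right₀ one_le_two (by omega)

theorem heisenberg_change_of_order_general
    (E : Type*) [NormedAddCommGroup E] [NormedSpace ℝ E]
    (U V W : E ≃ₗᵢ[ℝ] E) (hrel : HeisenbergRel U V W)
    (d : ℕ) (A B : Finset ℕ) (hA : A.Nonempty) (hB : B.Nonempty) :
    ‖(finsetProdOp (halfOp U) A * finsetProdOp (halfOp V) B -
          finsetProdOp (halfOp V) B * finsetProdOp (halfOp U) A) * avgOp W d‖ ≤
        8 * (2⁻¹ : ℝ) ^ ((d : ℤ) - (A.max' hA : ℤ) - (B.max' hB : ℤ)) ∧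
      ∀ d₁ d₂ d₃ : ℕ, (d₁ : ℤ) + (d₂ : ℤ) ≤ (d₃ : ℤ) - 2 →
        ‖(avgOp U d₁ * avgOp V d₂ - avgOp V d₂ * avgOp U d₁) * avgOp W d₃‖ ≤
          8 * (2⁻¹ : ℝ) ^ ((d₃ : ℤ) - ((d₁ : ℤ) + (d₂ : ℤ))) := by
  refine ⟨?_, fun d₁ d₂ d₃ _ => ?_⟩
  · refine (norm_commutator_finsetProdOp_mul_avgOp_le_zpow hrel
      (s := A.max' hA + 1) (t := B.max' hB + 1) (fun a ha => Nat.lt_succ_of_le (A.le_max' a ha))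
      (fun b hb => Nat.lt_succ_of_le (B.le_max' b hb)) d).trans
      (two_zpow_le_eight_mul_inv_two_zpow ?_)
    push_cast
    omega
  · rw [avgOp_eq_finsetProdOp U, avgOp_eq_finsetProdOp V]
    refine (norm_commutator_finsetProdOp_mul_avgOp_le_zpow hrel
      (fun a => Finset.mem_range.1) (fun b => Finset.mem_range.1) d₃).trans
      (two_zpow_le_eight_mul_inv_two_zpow ?_)
    omega

/-- Norm bound for the commutator of products of the `X_a` and the `Y_b` against `Z^d`:
`‖((∏_{a ∈ A} X_a)(∏_{b ∈ B} Y_b) - (∏_{b ∈ B} Y_b)(∏_{a ∈ A} X_a)) Z^d‖ ≤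
8 (1/2)^{d - max A - max B}`; in particular, for `d₁ + d₂ ≤ d₃ - 2`,
`‖(X^{d₁} Y^{d₂} - Y^{d₂} X^{d₁}) Z^{d₃}‖ ≤ 8 (1/2)^{d₃ - (d₁ + d₂)}`. -/
theorem heisenberg_change_of_order
    (E : Type*) [NormedAddCommGroup E] [NormedSpace ℝ E] [CompleteSpace E]
    (U V W : E ≃ₗᵢ[ℝ] E) (hrel : HeisenbergRel U V W)
    (d : ℕ) (A B : Finset ℕ) (hA : A.Nonempty) (hB : B.Nonempty)
    (hAd : ∀ a ∈ A, a < d) (hBd : ∀ b ∈ B, b < d)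
    (hmax : (A.max' hA : ℤ) * (B.max' hB : ℤ) ≤ (d : ℤ) - 2) :
    ‖(finsetProdOp (halfOp U) A * finsetProdOp (halfOp V) B -
          finsetProdOp (halfOp V) B * finsetProdOp (halfOp U) A) * avgOp W d‖ ≤
        8 * (2⁻¹ : ℝ) ^ ((d : ℤ) - (A.max' hA : ℤ) - (B.max' hB : ℤ)) ∧
      ∀ d₁ d₂ d₃ : ℕ, (d₁ : ℤ) + (d₂ : ℤ) ≤ (d₃ : ℤ) - 2 →
        ‖(avgOp U d₁ * avgOp V d₂ - avgOp V d₂ * avgOp U d₁) * avgOp W d₃‖ ≤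
          8 * (2⁻¹ : ℝ) ^ ((d₃ : ℤ) - ((d₁ : ℤ) + (d₂ : ℤ))) :=
  heisenberg_change_of_order_general E U V W hrel d A B hA hB
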